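/- Let (Ω, ℱ, P) be a probability space and X₁, …, X_n : Ω → ℝ be independent random variables. Let v₁, …, v_n ∈ ℝ, let k₁, …, k_n be positive reals with k₁ + ⋯ + k_n = m, and let M₁, …, M_n > 0, ε ≥ 0, σ > 0 be constants such that for every i and every λ ∈ ℝ the function ω ↦ exp(λ·(Xᵢ(ω) − vᵢ)) is integrable and E[exp(λ(Xᵢ − vᵢ))] ≤ Mᵢ·exp(ε|λ| + λ²/(2σ²kᵢ)). Then the weighted average Y = Σᵢ (kᵢ/m)·Xᵢ, with v = Σᵢ (kᵢ/m)·vᵢ, satisfies, for every λ ∈ ℝ, E[exp(λ(Y − v))] ≤ (∏ᵢ Mᵢ)·exp(ε|λ| + λ²/(2σ²m)). -/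

import Mathlib

open MeasureTheory ProbabilityTheory Real

/-! Centre each `Xᵢ` at `vᵢ`. By independence the MGF of the weighted sum is the product of the
MGFs of the centred variables at the rescaled parameters `(kᵢ / m) λ`; bounding each factor by
hypothesis, the biases `ε |kᵢ λ / m|` sum to `ε |λ|` because the weights sum to one, and the
variance terms `(kᵢ λ / m)² / (2σ² kᵢ) = kᵢ λ² / (2σ² m²)` sum to `λ² / (2σ² m)`. -/

theorem ProbabilityTheory.iIndepFun.mgf_sum_const_mul {Ω ι : Type*} [MeasurableSpace Ω]
    {μ : Measure Ω} {Y : ι → Ω → ℝ} (hindep : iIndepFun Y μ) (hY : ∀ i, Measurable (Y i))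
    (w : ι → ℝ) (s : Finset ι) (t : ℝ) :
    mgf (fun ω => ∑ i ∈ s, w i * Y i ω) μ t = ∏ i ∈ s, mgf (Y i) μ (w i * t) := by
  have hwY : iIndepFun (fun i ω => w i * Y i ω) μ :=
    hindep.comp (fun i x => w i * x) fun i => measurable_const_mul (w i)
  have hsum := hwY.mgf_sum (t := t) (fun i => (hY i).const_mul (w i)) s
  simp only [mgf_const_mul] at hsum
  rwa [Finset.sum_fn] at hsum

theorem Finset.sum_abs_mul_of_sum_eq_one {ι : Type*} {s : Finset ι} {w : ι → ℝ}
    (hw : ∀ i ∈ s, 0 ≤ w i) (hw_sum : ∑ i ∈ s, w i = 1) (l : ℝ) :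
    ∑ i ∈ s, |w i * l| = |l| := by
  calc ∑ i ∈ s, |w i * l| = (∑ i ∈ s, w i) * |l| := by
        rw [Finset.sum_mul]
        exact Finset.sum_congr rfl fun i hi => by rw [abs_mul, abs_of_nonneg (hw i hi)]
    _ = |l| := by rw [hw_sum, one_mul]

theorem Finset.sum_sq_proportional_div {ι : Type*} {s : Finset ι} {k : ι → ℝ}
    (hk : ∀ i ∈ s, k i ≠ 0) {m : ℝ} (hm : ∑ i ∈ s, k i = m) (hm0 : m ≠ 0) (c l : ℝ) :
    ∑ i ∈ s, (k i / m * l) ^ 2 / (c * k i) = l ^ 2 / (c * m) := by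
  calc ∑ i ∈ s, (k i / m * l) ^ 2 / (c * k i) = ∑ i ∈ s, k i * (l ^ 2 / (c * m ^ 2)) := by
        refine Finset.sum_congr rfl fun i hi => ?_
        field_simp [hk i hi]
    _ = l ^ 2 / (c * m) := by
        rw [← Finset.sum_mul, hm]
        field_simp

theorem mgf_bound_weighted_average_general {Ω : Type*} [MeasurableSpace Ω]
    (μ : Measure Ω)
    (n : ℕ) (hn : 0 < n) (X : Fin n → Ω → ℝ) (hX : ∀ i, Measurable (X i))
    (hindep : iIndepFun X μ)
    (v : Fin n → ℝ) (k : Fin n → ℝ) (hk : ∀ i, 0 < k i)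
    (m : ℝ) (hm : ∑ i, k i = m)
    (M : Fin n → ℝ)
    (ε σ : ℝ)
    (hmgf : ∀ i, ∀ l : ℝ, Integrable (fun ω => Real.exp (l * (X i ω - v i))) μ ∧
      ∫ ω, Real.exp (l * (X i ω - v i)) ∂μ ≤
        M i * Real.exp (ε * |l| + l ^ 2 / (2 * σ ^ 2 * k i)))
    (l : ℝ) :
    ∫ ω, Real.exp (l * ((∑ i, (k i / m) * X i ω) - ∑ i, (k i / m) * v i)) ∂μ ≤
      (∏ i, M i) * Real.exp (ε * |l| + l ^ 2 / (2 * σ ^ 2 * m)) := by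
  have hm0 : 0 < m := hm ▸ Finset.sum_pos (fun i _ => hk i) ⟨⟨0, hn⟩, Finset.mem_univ _⟩
  have hcentred : iIndepFun (fun i ω => X i ω - v i) μ :=
    hindep.comp (fun i x => x - v i) fun i => measurable_id.sub_const (v i)
  have hweights : ∑ i, k i / m = 1 := by rw [← Finset.sum_div, hm, div_self hm0.ne']
  calc ∫ ω, Real.exp (l * ((∑ i, (k i / m) * X i ω) - ∑ i, (k i / m) * v i)) ∂μ
      = mgf (fun ω => ∑ i, k i / m * (X i ω - v i)) μ l := by
        simp only [mgf, mul_sub, Finset.sum_sub_distrib]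
    _ = ∏ i, mgf (fun ω => X i ω - v i) μ (k i / m * l) :=
        hcentred.mgf_sum_const_mul (fun i => (hX i).sub_const (v i)) _ _ _
    _ ≤ ∏ i, M i * Real.exp (ε * |k i / m * l| + (k i / m * l) ^ 2 / (2 * σ ^ 2 * k i)) :=
        Finset.prod_le_prod (fun i _ => mgf_nonneg) fun i _ => (hmgf i _).2
    _ = (∏ i, M i) * Real.exp (ε * |l| + l ^ 2 / (2 * σ ^ 2 * m)) := by
        rw [Finset.prod_mul_distrib, ← Real.exp_sum, Finset.sum_add_distrib, ← Finset.mul_sum,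
          Finset.sum_abs_mul_of_sum_eq_one (fun i _ => (div_pos (hk i) hm0).le) hweights,
          Finset.sum_sq_proportional_div (fun i _ => (hk i).ne') hm hm0.ne']

/-- MGF bound for a weighted average of independent estimates (AVG node of TrailBlazer):
biases average while the variance parameters `1/(σ² kᵢ)` combine into `1/(σ² m)` with
`m = ∑ kᵢ`, and the multiplicative constants multiply. -/
theorem mgf_bound_weighted_average {Ω : Type*} [MeasurableSpace Ω]
    (μ : Measure Ω) [IsProbabilityMeasure μ]
    (n : ℕ) (hn : 0 < n) (X : Fin n → Ω → ℝ) (hX : ∀ i, Measurable (X i))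
    (hindep : iIndepFun X μ)
    (v : Fin n → ℝ) (k : Fin n → ℝ) (hk : ∀ i, 0 < k i)
    (m : ℝ) (hm : ∑ i, k i = m)
    (M : Fin n → ℝ) (hM : ∀ i, 0 < M i)
    (ε σ : ℝ) (hε : 0 ≤ ε) (hσ : 0 < σ)
    (hmgf : ∀ i, ∀ l : ℝ, Integrable (fun ω => Real.exp (l * (X i ω - v i))) μ ∧
      ∫ ω, Real.exp (l * (X i ω - v i)) ∂μ ≤
        M i * Real.exp (ε * |l| + l ^ 2 / (2 * σ ^ 2 * k i)))
    (l : ℝ) :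
    ∫ ω, Real.exp (l * ((∑ i, (k i / m) * X i ω) - ∑ i, (k i / m) * v i)) ∂μ ≤
      (∏ i, M i) * Real.exp (ε * |l| + l ^ 2 / (2 * σ ^ 2 * m)) :=
  mgf_bound_weighted_average_general μ n hn X hX hindep v k hk m hm M ε σ hmgf l
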